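/- Suppose that for every finite group G, every subgroup H ≤ G, and every finite generating multiset S of G with |S| ≤ [G:H], the multiset S is Nielsen equivalent to a multiset contained in a left-right transversal of H in G. Then the same conclusion holds for every group G, every finite index subgroup H ≤ G, and every finite generating multiset S of G with |S| ≤ [G:H]. -/

import Mathlib

/-!
Pass to the finite quotient `π : G → G ⧸ N` by the normal core `N` of `H`, apply the hypothesis
there, and lift the Nielsen moves back to `G`. The lifted multiset maps into a left-right
transversal `T` of the image of `H`, but two distinct elements `x ≠ y` may have the same image.
Such a collision is removed by replacing one copy of `y` with `u * y`, where `u` lies in the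
subgroup generated by the remaining elements (they still generate `G` modulo `N`, since `x` is
among them) and `π (u * y)` is an element of `T` not yet hit; one exists since
`|T| = [G : H] ≥ |S|`. Once `π` is injective on the multiset, a section of `π` through its
elements maps `T` onto a left-right transversal of `H` containing it.
-/

open scoped Classical

section Defs

variable {G : Type*} [Group G]

/-- A single Nielsen move on a finite multiset of group elements: replace one
occurrence of `g` by `g⁻¹`, or by `h * g` or `g * h` where `h` is another
occurrence in the multiset. -/
def NielsenMove (S T : Multiset G) : Prop :=
  (∃ g ∈ S, T = g⁻¹ ::ₘ S.erase g) ∨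
    (∃ g ∈ S, ∃ h ∈ S.erase g, T = h * g ::ₘ S.erase g ∨ T = g * h ::ₘ S.erase g)

/-- Nielsen equivalence: one multiset is obtained from the other by a finite
sequence of Nielsen moves. -/
def NielsenEquiv (S T : Multiset G) : Prop :=
  Relation.ReflTransGen NielsenMove S T

/-- The elements of the multiset `S` lie in pairwise distinct left cosets of `H`. -/
def LeftDistinct (H : Subgroup G) (S : Multiset G) : Prop :=
  (S.map fun x => ((x : G) : G ⧸ H)).Nodup

/-- The elements of the multiset `S` lie in pairwise distinct right cosets of `H`
(using that `Hx = Hy ↔ x⁻¹H = y⁻¹H`). -/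
def RightDistinct (H : Subgroup G) (S : Multiset G) : Prop :=
  (S.map fun x => ((x⁻¹ : G) : G ⧸ H)).Nodup

/-- `T` is a left transversal of `H`: it contains exactly one element of each
left coset of `H`. -/
def IsLeftTransversal (H : Subgroup G) (T : Set G) : Prop :=
  ∀ g : G, ∃! t, t ∈ T ∧ ((t : G) : G ⧸ H) = ((g : G) : G ⧸ H)

/-- `T` is a right transversal of `H`: it contains exactly one element of each
right coset of `H` (using that `Hx = Hy ↔ x⁻¹H = y⁻¹H`). -/
def IsRightTransversal (H : Subgroup G) (T : Set G) : Prop :=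
  ∀ g : G, ∃! t, t ∈ T ∧ ((t⁻¹ : G) : G ⧸ H) = ((g⁻¹ : G) : G ⧸ H)

/-- The left coset `aH` as a set. -/
def lcoset (a : G) (H : Subgroup G) : Set G := {x | a⁻¹ * x ∈ H}

/-- The right coset `Ha` as a set. -/
def rcoset (H : Subgroup G) (a : G) : Set G := {x | x * a⁻¹ ∈ H}

/-- The double coset `HgH` as a set. -/
def dcoset (H : Subgroup G) (g : G) : Set G := {x | ∃ h₁ ∈ H, ∃ h₂ ∈ H, x = h₁ * g * h₂}

/-- `S` is left-right clean relative to `H`: `S ∖ H` is nonempty and its elements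
lie in pairwise distinct left cosets and pairwise distinct right cosets of `H`. -/
def LeftRightClean (H : Subgroup G) (S : Multiset G) : Prop :=
  (∃ x ∈ S, x ∉ H) ∧
    LeftDistinct H (S.filter fun x => x ∉ H) ∧
    RightDistinct H (S.filter fun x => x ∉ H)

end Defs

universe u

section Nielsen

variable {G : Type*} [Group G]

theorem nielsenMove_iff {S T : Multiset G} :
    NielsenMove S T ↔ ∃ g g' R, S = g ::ₘ R ∧ T = g' ::ₘ R ∧
      (g' = g⁻¹ ∨ ∃ h ∈ R, g' = h * g ∨ g' = g * h) := by
  constructor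
  · rintro (⟨g, hg, rfl⟩ | ⟨g, hg, h, hh, rfl | rfl⟩) <;>
      refine ⟨g, _, S.erase g, (Multiset.cons_erase hg).symm, rfl, ?_⟩
    · exact Or.inl rfl
    · exact Or.inr ⟨h, hh, Or.inl rfl⟩
    · exact Or.inr ⟨h, hh, Or.inr rfl⟩
  · rintro ⟨g, g', R, rfl, rfl, rfl | ⟨h, hh, rfl | rfl⟩⟩
    · exact Or.inl ⟨g, Multiset.mem_cons_self _ _, by rw [Multiset.erase_cons_head]⟩
    all_goals
      refine Or.inr ⟨g, Multiset.mem_cons_self _ _, h, ?_, ?_⟩ <;>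
        simp only [Multiset.erase_cons_head, true_or, or_true, hh]

theorem NielsenEquiv.refl (S : Multiset G) : NielsenEquiv S S :=
  Relation.ReflTransGen.refl

theorem NielsenEquiv.trans {S T U : Multiset G} (h₁ : NielsenEquiv S T)
    (h₂ : NielsenEquiv T U) : NielsenEquiv S U :=
  Relation.ReflTransGen.trans h₁ h₂

theorem NielsenMove.nielsenEquiv {S T : Multiset G} (h : NielsenMove S T) : NielsenEquiv S T :=
  Relation.ReflTransGen.single h

theorem NielsenMove.card_eq {S T : Multiset G} (h : NielsenMove S T) :
    Multiset.card T = Multiset.card S := by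
  obtain ⟨g, g', R, rfl, rfl, -⟩ := nielsenMove_iff.1 h
  simp

theorem NielsenEquiv.card_eq {S T : Multiset G} (h : NielsenEquiv S T) :
    Multiset.card T = Multiset.card S := by
  induction h with
  | refl => rfl
  | tail _ hmove ih => rw [hmove.card_eq, ih]

theorem NielsenMove.closure_le {S T : Multiset G} (h : NielsenMove S T) :
    Subgroup.closure {x | x ∈ S} ≤ Subgroup.closure {x | x ∈ T} := by
  obtain ⟨g, g', R, rfl, rfl, hg'⟩ := nielsenMove_iff.1 h
  set K := Subgroup.closure {x | x ∈ g' ::ₘ R}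
  have hR : ∀ x ∈ R, x ∈ K := fun x hx ↦
    Subgroup.subset_closure (Multiset.mem_cons_of_mem hx)
  have hg'K : g' ∈ K := Subgroup.subset_closure (Multiset.mem_cons_self _ _)
  have hgK : g ∈ K := by
    rcases hg' with rfl | ⟨k, hk, rfl | rfl⟩
    · simpa using inv_mem hg'K
    · simpa using mul_mem (inv_mem (hR k hk)) hg'K
    · simpa using mul_mem hg'K (inv_mem (hR k hk))
  rw [Subgroup.closure_le]
  intro x hx
  rcases Multiset.mem_cons.1 hx with rfl | hx
  exacts [hgK, hR x hx]

theorem NielsenEquiv.closure_eq_top {S T : Multiset G} (h : NielsenEquiv S T)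
    (hS : Subgroup.closure {x | x ∈ S} = ⊤) : Subgroup.closure {x | x ∈ T} = ⊤ := by
  induction h with
  | refl => exact hS
  | tail _ hmove ih => exact top_le_iff.1 (ih ▸ hmove.closure_le)

theorem NielsenEquiv.cons_inv (g : G) (R : Multiset G) :
    NielsenEquiv (g ::ₘ R) (g⁻¹ ::ₘ R) :=
  (nielsenMove_iff.2 ⟨g, _, R, rfl, rfl, Or.inl rfl⟩).nielsenEquiv

theorem NielsenEquiv.cons_mul_left_of_mem {R : Multiset G} {h : G} (hh : h ∈ R) (g : G) :
    NielsenEquiv (g ::ₘ R) (h * g ::ₘ R) :=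
  (nielsenMove_iff.2 ⟨g, _, R, rfl, rfl, Or.inr ⟨h, hh, Or.inl rfl⟩⟩).nielsenEquiv

theorem NielsenEquiv.cons_mul_right_of_mem {R : Multiset G} {h : G} (hh : h ∈ R) (g : G) :
    NielsenEquiv (g ::ₘ R) (g * h ::ₘ R) :=
  (nielsenMove_iff.2 ⟨g, _, R, rfl, rfl, Or.inr ⟨h, hh, Or.inr rfl⟩⟩).nielsenEquiv

theorem NielsenEquiv.cons_mul_left {R : Multiset G} {w : G}
    (hw : w ∈ Subgroup.closure {x | x ∈ R}) (y : G) :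
    NielsenEquiv (y ::ₘ R) (w * y ::ₘ R) := by
  induction hw using Subgroup.closure_induction'' generalizing y with
  | mem x hx => exact .cons_mul_left_of_mem hx y
  | inv_mem x hx =>
    -- `y ↦ y⁻¹ ↦ y⁻¹ * x ↦ x⁻¹ * y`
    simpa using ((NielsenEquiv.cons_inv y R).trans (.cons_mul_right_of_mem hx y⁻¹)).trans
      (.cons_inv (y⁻¹ * x) R)
  | one => simpa using NielsenEquiv.refl (y ::ₘ R)
  | mul w₁ w₂ _ _ ih₁ ih₂ => simpa [mul_assoc] using (ih₂ y).trans (ih₁ (w₂ * y))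

end Nielsen

section Quotient

variable {G Q : Type*} [Group G] [Group Q]

theorem NielsenEquiv.exists_map_eq {π : G →* Q} {S : Multiset G} {T : Multiset Q}
    (h : NielsenEquiv (S.map π) T) : ∃ S', NielsenEquiv S S' ∧ S'.map π = T := by
  induction h with
  | refl => exact ⟨S, .refl S, rfl⟩
  | tail _ hmove ih =>
    obtain ⟨S₁, hS₁, rfl⟩ := ih
    obtain ⟨q, q', R, hS₁q, rfl, hq'⟩ := nielsenMove_iff.1 hmove
    obtain ⟨g, hg, rfl, rfl⟩ := (Multiset.map_eq_cons _ _ _ _).2 hS₁q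
    have hmove' : ∀ g', (g' = g⁻¹ ∨ ∃ h ∈ S₁.erase g, g' = h * g ∨ g' = g * h) →
        NielsenEquiv S (g' ::ₘ S₁.erase g) := fun g' hg' ↦
      hS₁.trans
        (nielsenMove_iff.2 ⟨g, g', _, (Multiset.cons_erase hg).symm, rfl, hg'⟩).nielsenEquiv
    rcases hq' with rfl | ⟨_, hkR, rfl | rfl⟩
    · exact ⟨_, hmove' g⁻¹ (Or.inl rfl), by simp⟩
    · obtain ⟨k, hk, rfl⟩ := Multiset.mem_map.1 hkR
      exact ⟨_, hmove' (k * g) (Or.inr ⟨k, hk, Or.inl rfl⟩), by simp⟩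
    · obtain ⟨k, hk, rfl⟩ := Multiset.mem_map.1 hkR
      exact ⟨_, hmove' (g * k) (Or.inr ⟨k, hk, Or.inr rfl⟩), by simp⟩

theorem closure_multiset_map (π : G →* Q) (S : Multiset G) :
    Subgroup.closure {q | q ∈ S.map π} = (Subgroup.closure {x | x ∈ S}).map π := by
  rw [MonoidHom.map_closure]
  congr 1
  ext q
  simp

theorem closure_multiset_map_eq_top {π : G →* Q} (hπ : Function.Surjective π)
    {S : Multiset G} (hS : Subgroup.closure {x | x ∈ S} = ⊤) :
    Subgroup.closure {q | q ∈ S.map π} = ⊤ := by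
  rw [closure_multiset_map, hS, ← MonoidHom.range_eq_map, MonoidHom.range_eq_top.2 hπ]

theorem exists_nielsenEquiv_map_toFinset_eq_insert {π : G →* Q} (hπ : Function.Surjective π)
    {S : Multiset G} (hS : Subgroup.closure {x | x ∈ S} = ⊤) {x y : G} (hx : x ∈ S)
    (hy : y ∈ S) (hxy : x ≠ y) (hπxy : π x = π y) (c : Q) :
    ∃ S', NielsenEquiv S S' ∧ (S'.map π).toFinset = insert c (S.map π).toFinset := by
  set R := S.erase y
  have hSR : S = y ::ₘ R := (Multiset.cons_erase hy).symm
  have hRS : (R.map π).toFinset = (S.map π).toFinset := by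
    have : π y ∈ (R.map π).toFinset := by
      simpa [← hπxy] using ⟨x, (Multiset.mem_erase_of_ne hxy).2 hx, rfl⟩
    rw [hSR, Multiset.map_cons, Multiset.toFinset_cons, Finset.insert_eq_of_mem this]
  have hRgen : (Subgroup.closure {x | x ∈ R}).map π = ⊤ := by
    have : {q | q ∈ R.map π} = {q | q ∈ S.map π} := by
      ext q
      simpa using Finset.ext_iff.1 hRS q
    rw [← closure_multiset_map, this, closure_multiset_map_eq_top hπ hS]
  obtain ⟨u, hu, hπu⟩ := Subgroup.mem_map.1 (hRgen ▸ Subgroup.mem_top (c * (π y)⁻¹))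
  refine ⟨u * y ::ₘ R, hSR ▸ NielsenEquiv.cons_mul_left hu y, ?_⟩
  rw [Multiset.map_cons, Multiset.toFinset_cons, hRS, map_mul, hπu, inv_mul_cancel_right]

theorem exists_nielsenEquiv_injOn_of_card_le {π : G →* Q} (hπ : Function.Surjective π)
    (T : Set Q) (S : Multiset G) (hS : Subgroup.closure {x | x ∈ S} = ⊤)
    (hST : ∀ x ∈ S, π x ∈ T) (hcard : Multiset.card S ≤ T.ncard) :
    ∃ S', NielsenEquiv S S' ∧ (∀ x ∈ S', π x ∈ T) ∧ Set.InjOn π {x | x ∈ S'} := by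
  by_cases hinj : Set.InjOn π {x | x ∈ S}
  · exact ⟨S, .refl S, hST, hinj⟩
  obtain ⟨x, hx, y, hy, hπxy, hxy⟩ : ∃ x ∈ S, ∃ y ∈ S, π x = π y ∧ x ≠ y := by
    simpa [Set.InjOn] using hinj
  have hlt : (S.map π).toFinset.card < Multiset.card S := by
    refine lt_of_lt_of_le ?_ S.toFinset_card_le
    rw [Multiset.toFinset_map]
    refine lt_of_le_of_ne Finset.card_image_le fun h ↦ hinj fun a ha b hb ↦ ?_
    exact Finset.card_image_iff.1 h (by simpa using ha) (by simpa using hb)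
  obtain ⟨c, hcT, hc⟩ : ∃ c ∈ T, c ∉ (S.map π).toFinset :=
    Set.exists_mem_notMem_of_ncard_lt_ncard
      ((Set.ncard_coe_finset _).trans_lt (hlt.trans_le hcard))
  obtain ⟨S', hSS', hS'⟩ := exists_nielsenEquiv_map_toFinset_eq_insert hπ hS hx hy hxy hπxy c
  have hS'T : ∀ x ∈ S', π x ∈ T := by
    intro z hz
    have : π z ∈ insert c (S.map π).toFinset := hS' ▸ by simpa using ⟨z, hz, rfl⟩
    rcases Finset.mem_insert.1 this with h | h
    · exact h ▸ hcT
    · obtain ⟨w, hw, hwz⟩ := Multiset.mem_map.1 (Multiset.mem_toFinset.1 h)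
      exact hwz ▸ hST w hw
  obtain ⟨S'', hS'S'', h⟩ := exists_nielsenEquiv_injOn_of_card_le hπ T S'
    (hSS'.closure_eq_top hS) hS'T (hSS'.card_eq ▸ hcard)
  exact ⟨S'', hSS'.trans hS'S'', h⟩
termination_by Multiset.card S - (S.map π).toFinset.card
decreasing_by
  rw [hSS'.card_eq, hS', Finset.card_insert_of_notMem hc]
  omega

end Quotient

theorem Function.Surjective.exists_rightInverse_leftInvOn {α β : Type*} {f : α → β}
    (hf : Function.Surjective f) {s : Set α} (hs : Set.InjOn f s) :
    ∃ ℓ : β → α, Function.RightInverse ℓ f ∧ Set.LeftInvOn ℓ f s := by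
  refine ⟨fun b ↦ if h : ∃ a ∈ s, f a = b then h.choose else Function.surjInv hf b,
    fun b ↦ ?_, fun a ha ↦ ?_⟩
  · dsimp only
    split_ifs with h
    exacts [h.choose_spec.2, Function.surjInv_eq hf b]
  · have h : ∃ a' ∈ s, f a' = f a := ⟨a, ha, rfl⟩
    simp only [dif_pos h]
    exact hs h.choose_spec.1 ha h.choose_spec.2

theorem existsUnique_mem_image_of_rightInverse {α β : Type*} {f : α → β} {ℓ : β → α}
    (hℓ : Function.RightInverse ℓ f) {r : α → α → Prop} {r' : β → β → Prop}
    (hr : ∀ a b, r a b ↔ r' (f a) (f b)) {T : Set β} (hT : ∀ q, ∃! t, t ∈ T ∧ r' t q)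
    (g : α) :
    ∃! t, t ∈ ℓ '' T ∧ r t g := by
  obtain ⟨t, ⟨htT, ht⟩, huniq⟩ := hT (f g)
  refine ⟨ℓ t, ⟨⟨t, htT, rfl⟩, (hr _ _).2 (by rwa [hℓ])⟩, ?_⟩
  rintro _ ⟨⟨s, hsT, rfl⟩, hs⟩
  rw [huniq s ⟨hsT, by simpa [hℓ s] using (hr _ _).1 hs⟩]

section Transversal

variable {G Q : Type*} [Group G] [Group Q] {H : Subgroup G}

theorem QuotientGroup.mk_eq_mk_iff_map_of_ker_le {π : G →* Q} (hker : π.ker ≤ H) (a b : G) :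
    (a : G ⧸ H) = b ↔ (π a : Q ⧸ H.map π) = π b := by
  rw [QuotientGroup.eq, QuotientGroup.eq, ← map_inv, ← map_mul, ← Subgroup.mem_comap,
    Subgroup.comap_map_eq_self hker]

theorem IsLeftTransversal.image_of_rightInverse {π : G →* Q} (hker : π.ker ≤ H)
    {ℓ : Q → G} (hℓ : Function.RightInverse ℓ π) {T : Set Q}
    (hT : IsLeftTransversal (H.map π) T) :
    IsLeftTransversal H (ℓ '' T) :=
  existsUnique_mem_image_of_rightInverse hℓ (QuotientGroup.mk_eq_mk_iff_map_of_ker_le hker) hT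

theorem IsRightTransversal.image_of_rightInverse {π : G →* Q} (hker : π.ker ≤ H)
    {ℓ : Q → G} (hℓ : Function.RightInverse ℓ π) {T : Set Q}
    (hT : IsRightTransversal (H.map π) T) :
    IsRightTransversal H (ℓ '' T) :=
  existsUnique_mem_image_of_rightInverse hℓ
    (fun a b ↦ by simpa using QuotientGroup.mk_eq_mk_iff_map_of_ker_le hker a⁻¹ b⁻¹) hT

theorem IsLeftTransversal.ncard_eq_index {T : Set G} (hT : IsLeftTransversal H T) :
    T.ncard = H.index := by
  have hbij : Function.Bijective fun t : T ↦ ((t : G) : G ⧸ H) := by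
    refine ⟨fun t t' htt' ↦ Subtype.ext ?_, fun q ↦ ?_⟩
    · exact (hT t).unique ⟨t.2, rfl⟩ ⟨t'.2, htt'.symm⟩
    · obtain ⟨g, rfl⟩ := QuotientGroup.mk_surjective q
      obtain ⟨t, ⟨htT, ht⟩, -⟩ := hT g
      exact ⟨⟨t, htT⟩, ht⟩
  rw [← Nat.card_coe_set_eq, Nat.card_congr (Equiv.ofBijective _ hbij), Subgroup.index_eq_card]

end Transversal

/-- if for every finite group, every subgroup `H` and every
generating multiset `S` with `|S| ≤ [G:H]`, `S` is Nielsen equivalent to a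
multiset contained in a left-right transversal of `H`, then the same holds for
every group with a finite-index subgroup. -/
theorem stmt8
    (hfin : ∀ (G : Type u) [Group G] [Finite G] (H : Subgroup G) (S : Multiset G),
      Subgroup.closure {x : G | x ∈ S} = ⊤ → S.card ≤ H.index →
      ∃ S' : Multiset G, NielsenEquiv S S' ∧
        ∃ T : Set G, IsLeftTransversal H T ∧ IsRightTransversal H T ∧ ∀ x ∈ S', x ∈ T) :
    ∀ (G : Type u) [Group G] (H : Subgroup G), H.FiniteIndex →
      ∀ S : Multiset G, Subgroup.closure {x : G | x ∈ S} = ⊤ → S.card ≤ H.index →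
      ∃ S' : Multiset G, NielsenEquiv S S' ∧
        ∃ T : Set G, IsLeftTransversal H T ∧ IsRightTransversal H T ∧ ∀ x ∈ S', x ∈ T := by
  intro G _ H _ S hS hcard
  let π := QuotientGroup.mk' H.normalCore
  have : Finite (G ⧸ H.normalCore) := Subgroup.finite_quotient_of_finiteIndex
  have hπ : Function.Surjective π := QuotientGroup.mk'_surjective _
  have hker : π.ker ≤ H := (QuotientGroup.ker_mk' _).trans_le H.normalCore_le
  have hindex : (H.map π).index = H.index := H.index_map_eq hπ hker
  obtain ⟨S₀, hSS₀, T, hTl, hTr, hS₀T⟩ := hfin _ (H.map π) (S.map π)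
    (closure_multiset_map_eq_top hπ hS)
    (by rwa [Multiset.card_map, hindex])
  obtain ⟨S₁, hSS₁, rfl⟩ := hSS₀.exists_map_eq
  obtain ⟨S₂, hS₁S₂, hS₂T, hinj⟩ := exists_nielsenEquiv_injOn_of_card_le hπ T S₁
    (hSS₁.closure_eq_top hS) (fun x hx ↦ hS₀T _ (Multiset.mem_map_of_mem π hx))
    (by rwa [hSS₁.card_eq, hTl.ncard_eq_index, hindex])
  obtain ⟨ℓ, hℓ, hℓS₂⟩ := hπ.exists_rightInverse_leftInvOn hinj
  exact ⟨S₂, hSS₁.trans hS₁S₂, ℓ '' T, hTl.image_of_rightInverse hker hℓ,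
    hTr.image_of_rightInverse hker hℓ, fun x hx ↦ ⟨π x, hS₂T x hx, hℓS₂ hx⟩⟩
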